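/- The coproduct Δ on A is coassociative: (Δ ⊗ id_A) ∘ Δ = (id_A ⊗ Δ) ∘ Δ as maps A → A ⊗ A ⊗ A. -/

import Mathlib

open scoped TensorProduct
set_option maxHeartbeats 4000000
set_option synthInstance.maxHeartbeats 1000000

/-- Rooted trees with vertices labeled by letters `x_i` (`i : ℕ`): an irreducible
parenthesized word `(X x_i)` is a root labeled `x_i` with the forest `X` attached. -/
inductive PTree : Type
  | node : ℕ → List PTree → PTree

/-- Parenthesized words: finite commutative products (multisets) of irreducible words. -/
abbrev Word : Type := Multiset PTree

/-- The free ℚ-vector space `A` on parenthesized words, as a commutative unital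
associative ℚ-algebra (the product is induced by the product of words, the unit is the
empty word `e = word 0`). -/
abbrev A : Type := AddMonoidAlgebra ℚ Word

/-- The basis vector of `A` corresponding to a parenthesized word. -/
noncomputable def word (m : Word) : A := AddMonoidAlgebra.single m 1

/-- The grafting operator `B_{(x_i)}`, sending a word `X` to `(X x_i)`. -/
noncomputable def B (i : ℕ) : A →ₗ[ℚ] A :=
  AddMonoidAlgebra.mapDomainLinearMap ℚ ℚ (fun m : Word => ({PTree.node i m.toList} : Word))

/-- The counit `ē : A → ℚ`, killing every nonempty word and sending `e` to `1`. -/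
noncomputable def ebar : A →ₗ[ℚ] ℚ :=
  (Finsupp.lapply (0 : Word)).comp (AddMonoidAlgebra.coeffLinearEquiv ℚ).toLinearMap

/-- The unit map `E : ℚ → A`, `q ↦ q • e`. -/
noncomputable def Eu : ℚ →ₗ[ℚ] A := AddMonoidAlgebra.lsingle 0

/-- The projection `P₁ = id_A − E ∘ ē`. -/
noncomputable def P1 : A →ₗ[ℚ] A := LinearMap.id - Eu.comp ebar



def treesize : PTree → ℕ
  | .node _ l => 1 + (l.attach.map (fun x => treesize x.1)).sum
decreasing_by
  have h1 : sizeOf x.1 < sizeOf l := List.sizeOf_lt_of_mem x.2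
  simp only [PTree.node.sizeOf_spec]
  omega

lemma treesize_node (i : ℕ) (l : List PTree) :
    treesize (.node i l) = 1 + (l.map treesize).sum := by
  unfold treesize
  congr 1
  rw [List.attach_map_val]

def wsize (m : Word) : ℕ := (m.map fun t => treesize t).sum

lemma treesize_pos (t : PTree) : 0 < treesize t := by
  cases t with
  | node i l => rw [treesize_node]; omega

lemma wsize_zero : wsize 0 = 0 := rfl

lemma wsize_cons (t : PTree) (s : Word) : wsize (t ::ₘ s) = treesize t + wsize s := by
  simp [wsize, Multiset.map_cons, Multiset.sum_cons]

lemma wsize_pos_of_ne_zero {s : Word} (hs : s ≠ 0) : 0 < wsize s := by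
  obtain ⟨t, ht⟩ := Multiset.exists_mem_of_ne_zero hs
  obtain ⟨u, rfl⟩ := Multiset.exists_cons_of_mem ht
  rw [wsize_cons]
  clear ht
  have := treesize_pos t
  omega

lemma wsize_eq_zero {m : Word} (h : wsize m = 0) : m = 0 := by
  by_contra hne
  exact absurd h (by have := wsize_pos_of_ne_zero hne; omega)

lemma wsize_coe (l : List PTree) : wsize (l : Word) = (l.map treesize).sum := by
  simp [wsize]





lemma ebar_apply (f : A) : ebar f = f.coeff 0 := rfl

lemma Eu_apply (q : ℚ) : Eu q = AddMonoidAlgebra.single 0 q := rfl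

lemma ebar_single_zero (c : ℚ) : ebar (AddMonoidAlgebra.single (0 : Word) c : A) = c := by
  rw [ebar_apply, AddMonoidAlgebra.coeff_single, Finsupp.single_eq_same]

lemma ebar_single_ne {X : Word} (h : X ≠ 0) (c : ℚ) :
    ebar (AddMonoidAlgebra.single X c : A) = 0 := by
  rw [ebar_apply, AddMonoidAlgebra.coeff_single, Finsupp.single_eq_of_ne' h]

lemma B_word (i : ℕ) (m : Word) : B i (word m) = word {PTree.node i m.toList} := by
  show AddMonoidAlgebra.mapDomainLinearMap ℚ ℚ _ (AddMonoidAlgebra.single m 1) = _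
  rw [AddMonoidAlgebra.mapDomainLinearMap_single]; rfl

lemma ebar_word_zero : ebar (word 0) = 1 := ebar_single_zero 1

lemma ebar_word_ne {m : Word} (h : m ≠ 0) : ebar (word m) = 0 := ebar_single_ne h 1

lemma ebar_Eu (q : ℚ) : ebar (Eu q) = q := by rw [Eu_apply, ebar_single_zero]

lemma Eu_one : Eu 1 = word 0 := rfl

lemma word_mul (X Y : Word) : word X * word Y = word (X + Y) := by
  unfold word
  exact (AddMonoidAlgebra.single_mul_single _ _ _ _).trans (by rw [one_mul])

lemma single_eq_smul_word (X : Word) (c : ℚ) : (AddMonoidAlgebra.single X c : A) = c • word X := by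
  unfold word
  rw [AddMonoidAlgebra.smul_single, smul_eq_mul, mul_one]

lemma ebar_mul (a b : A) : ebar (a * b) = ebar a * ebar b := by
  induction a using AddMonoidAlgebra.induction_linear with
  | zero => simp
  | add f g hf hg => simp [add_mul, hf, hg]
  | single X c =>
    induction b using AddMonoidAlgebra.induction_linear with
    | zero => simp
    | add f g hf hg => simp [mul_add, hf, hg]
    | single Y d =>
      rw [single_eq_smul_word, single_eq_smul_word, smul_mul_assoc, mul_smul_comm,
        word_mul, map_smul, map_smul, map_smul, map_smul]
      rcases eq_or_ne X 0 with rfl | hX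
      · rcases eq_or_ne Y 0 with rfl | hY
        · simp [ebar_word_zero]
        · have h0Y : (0 : Word) + Y ≠ 0 := fun h => hY (by simpa using h)
          rw [ebar_word_ne h0Y, ebar_word_ne hY]; simp
      · have hXY : X + Y ≠ 0 := fun h => hX (add_eq_zero.mp h).1
        rw [ebar_word_ne hXY, ebar_word_ne hX]; simp

open TensorProduct


section MulHelpers
variable {R : Type*} [CommSemiring R] {C D : Type*}
  [NonUnitalNonAssocSemiring C] [Module R C] [SMulCommClass R C C] [IsScalarTower R C C]
  [NonUnitalNonAssocSemiring D] [Module R D] [SMulCommClass R D D] [IsScalarTower R D D]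

lemma tp_add_mul (u v w : C ⊗[R] D) : (u + v) * w = u * w + v * w := by
  change Algebra.TensorProduct.mul (u + v) w
    = Algebra.TensorProduct.mul u w + Algebra.TensorProduct.mul v w
  rw [map_add, LinearMap.add_apply]

lemma tp_mul_add (u v w : C ⊗[R] D) : u * (v + w) = u * v + u * w := by
  change Algebra.TensorProduct.mul u (v + w)
    = Algebra.TensorProduct.mul u v + Algebra.TensorProduct.mul u w
  rw [map_add]

lemma tp_zero_mul (w : C ⊗[R] D) : 0 * w = 0 := by
  change Algebra.TensorProduct.mul 0 w = 0
  rw [map_zero, LinearMap.zero_apply]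

lemma tp_mul_zero (u : C ⊗[R] D) : u * 0 = 0 := by
  change Algebra.TensorProduct.mul u 0 = 0
  rw [map_zero]
end MulHelpers

lemma id_mul (a b : A) : (LinearMap.id : A →ₗ[ℚ] A) (a * b) =
    (LinearMap.id : A →ₗ[ℚ] A) a * (LinearMap.id : A →ₗ[ℚ] A) b := rfl

lemma Eu_smul (q : ℚ) : Eu q = q • word 0 := by
  rw [Eu_apply]
  unfold word
  rw [AddMonoidAlgebra.smul_single, smul_eq_mul, mul_one]

lemma Eu_mul (q r : ℚ) : Eu q * Eu r = Eu (q * r) := by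
  rw [Eu_smul, Eu_smul, Eu_smul, smul_mul_assoc, mul_smul_comm, word_mul, add_zero, smul_smul]

noncomputable def EE : A →ₗ[ℚ] A := Eu ∘ₗ ebar

lemma EE_mul (a b : A) : EE (a * b) = EE a * EE b := by
  simp only [EE, LinearMap.comp_apply, ebar_mul, Eu_mul]

lemma EE_P1 (a : A) : EE (P1 a) = 0 := by
  simp only [EE, P1, LinearMap.comp_apply, LinearMap.sub_apply, LinearMap.id_apply,
    map_sub, ebar_Eu]
  simp

lemma EE_word_zero : EE (word 0) = word 0 := by
  rw [EE, LinearMap.comp_apply, ebar_word_zero, Eu_one]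

lemma EE_word_ne {m : Word} (h : m ≠ 0) : EE (word m) = 0 := by
  rw [EE, LinearMap.comp_apply, ebar_word_ne h, map_zero]

lemma map_EE_B_P1 (i : ℕ) (X : A ⊗[ℚ] A) :
    TensorProduct.map EE LinearMap.id
      (TensorProduct.map LinearMap.id (B i) (TensorProduct.map P1 LinearMap.id X)) = 0 := by
  induction X using TensorProduct.induction_on with
  | zero => simp
  | add u v hu hv => simp only [map_add, hu, hv, add_zero]
  | tmul a b =>
    simp only [TensorProduct.map_tmul, LinearMap.id_coe, id_eq, EE_P1, TensorProduct.zero_tmul]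

lemma map_P1_eq (X : A ⊗[ℚ] A) :
    TensorProduct.map P1 LinearMap.id X = X - TensorProduct.map EE LinearMap.id X := by
  induction X using TensorProduct.induction_on with
  | zero => simp
  | add u v hu hv => rw [map_add, hu, hv, map_add]; abel
  | tmul a b =>
    simp only [TensorProduct.map_tmul, LinearMap.id_coe, id_eq, P1, LinearMap.sub_apply,
      LinearMap.id_apply, TensorProduct.sub_tmul]
    rfl

lemma map_mul_tensor {C D : Type*} [Semiring C] [Semiring D] [Algebra ℚ C] [Algebra ℚ D]
    (f : A →ₗ[ℚ] C) (g : A →ₗ[ℚ] D)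
    (hf : ∀ a b, f (a * b) = f a * f b) (hg : ∀ a b, g (a * b) = g a * g b)
    (u v : A ⊗[ℚ] A) :
    TensorProduct.map f g (u * v) = TensorProduct.map f g u * TensorProduct.map f g v := by
  induction u using TensorProduct.induction_on with
  | zero => rw [tp_zero_mul, map_zero, tp_zero_mul]
  | add x y hx hy => rw [tp_add_mul, map_add, hx, hy, map_add, tp_add_mul]
  | tmul a b =>
    induction v using TensorProduct.induction_on with
    | zero => rw [tp_mul_zero, map_zero, tp_mul_zero]
    | add x y hx hy => rw [tp_mul_add, map_add, hx, hy, map_add, tp_mul_add]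
    | tmul c d =>
      rw [Algebra.TensorProduct.tmul_mul_tmul, TensorProduct.map_tmul, TensorProduct.map_tmul,
        TensorProduct.map_tmul, Algebra.TensorProduct.tmul_mul_tmul, hf, hg]

lemma assoc_mul (u v : (A ⊗[ℚ] A) ⊗[ℚ] A) :
    TensorProduct.assoc ℚ A A A (u * v) =
      TensorProduct.assoc ℚ A A A u * TensorProduct.assoc ℚ A A A v := by
  induction u using TensorProduct.induction_on with
  | zero => rw [tp_zero_mul, map_zero, tp_zero_mul]
  | add x y hx hy => rw [tp_add_mul, map_add, hx, hy, map_add, tp_add_mul]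
  | tmul x c =>
    induction v using TensorProduct.induction_on with
    | zero => rw [tp_mul_zero, map_zero, tp_mul_zero]
    | add x' y' hx hy => rw [tp_mul_add, map_add, hx, hy, map_add, tp_mul_add]
    | tmul y d =>
      induction x using TensorProduct.induction_on with
      | zero => rw [TensorProduct.zero_tmul, tp_zero_mul, map_zero, tp_zero_mul]
      | add x1 x2 h1 h2 =>
        rw [TensorProduct.add_tmul, tp_add_mul, map_add, h1, h2, map_add, tp_add_mul]
      | tmul a b =>
        induction y using TensorProduct.induction_on with
        | zero => rw [TensorProduct.zero_tmul, tp_mul_zero, map_zero, tp_mul_zero]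
        | add y1 y2 h1 h2 =>
          rw [TensorProduct.add_tmul, tp_mul_add, map_add, h1, h2, map_add, tp_mul_add]
        | tmul a' b' =>
          rw [Algebra.TensorProduct.tmul_mul_tmul, Algebra.TensorProduct.tmul_mul_tmul,
            TensorProduct.assoc_tmul, TensorProduct.assoc_tmul, TensorProduct.assoc_tmul,
            Algebra.TensorProduct.tmul_mul_tmul, Algebra.TensorProduct.tmul_mul_tmul]

noncomputable def rW : A →ₗ[ℚ] A ⊗[ℚ] A := (TensorProduct.mk ℚ A A).flip (word 0)

lemma rW_apply (x : A) : rW x = x ⊗ₜ[ℚ] word 0 := rfl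

lemma assoc_tmul_word0 (x : A ⊗[ℚ] A) :
    TensorProduct.assoc ℚ A A A (x ⊗ₜ[ℚ] word 0) = TensorProduct.map LinearMap.id rW x := by
  induction x using TensorProduct.induction_on with
  | zero => simp
  | add u v hu hv =>
    rw [TensorProduct.add_tmul, map_add, hu, hv, map_add]
  | tmul a b =>
    rw [TensorProduct.assoc_tmul, TensorProduct.map_tmul, rW_apply, LinearMap.id_coe, id_eq]

section MulHelpers2
variable {R : Type*} [CommSemiring R] {C D : Type*}
  [NonUnitalNonAssocSemiring C] [Module R C] [SMulCommClass R C C] [IsScalarTower R C C]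
  [NonUnitalNonAssocSemiring D] [Module R D] [SMulCommClass R D D] [IsScalarTower R D D]

lemma tp_smul_mul (q : R) (u v : C ⊗[R] D) : (q • u) * v = q • (u * v) := by
  change Algebra.TensorProduct.mul (q • u) v = q • Algebra.TensorProduct.mul u v
  rw [map_smul, LinearMap.smul_apply]

lemma tp_mul_smul (q : R) (u v : C ⊗[R] D) : u * (q • v) = q • (u * v) := by
  change Algebra.TensorProduct.mul u (q • v) = q • Algebra.TensorProduct.mul u v
  rw [map_smul]
end MulHelpers2

lemma map_id_map_id {M N P : Type*} [AddCommMonoid M] [AddCommMonoid N] [AddCommMonoid P]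
    [Module ℚ M] [Module ℚ N] [Module ℚ P]
    (g : N →ₗ[ℚ] P) (g' : M →ₗ[ℚ] N) (x : A ⊗[ℚ] M) :
    TensorProduct.map LinearMap.id g (TensorProduct.map LinearMap.id g' x)
      = TensorProduct.map LinearMap.id (g ∘ₗ g') x := by
  rw [← LinearMap.comp_apply, ← TensorProduct.map_comp, LinearMap.id_comp]

section Delta
variable (Δ : A →ₗ[ℚ] A ⊗[ℚ] A)

lemma hmul (hΔm : ∀ X Y : Word, Δ (word X * word Y) = Δ (word X) * Δ (word Y))
    (a b : A) : Δ (a * b) = Δ a * Δ b := by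
  induction a using AddMonoidAlgebra.induction_linear with
  | zero => rw [zero_mul, map_zero, tp_zero_mul]
  | add f g hf hg => rw [add_mul, map_add, hf, hg, map_add, tp_add_mul]
  | single X c =>
    induction b using AddMonoidAlgebra.induction_linear with
    | zero => rw [mul_zero, map_zero, tp_mul_zero]
    | add f g hf hg => rw [mul_add, map_add, hf, hg, map_add, tp_mul_add]
    | single Y d =>
      rw [single_eq_smul_word, single_eq_smul_word, smul_mul_assoc, mul_smul_comm, map_smul,
        map_smul, map_smul, map_smul, hΔm, tp_smul_mul, tp_mul_smul]

lemma lcounit (hΔe : Δ (word 0) = word 0 ⊗ₜ[ℚ] word 0)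
    (hΔB : ∀ (i : ℕ) (l : List PTree),
      Δ (word {PTree.node i l}) =
        word {PTree.node i l} ⊗ₜ[ℚ] word 0 + word 0 ⊗ₜ[ℚ] word {PTree.node i l} +
          TensorProduct.map LinearMap.id (B i)
            (TensorProduct.map P1 LinearMap.id (Δ (word (l : Multiset PTree)))))
    (hΔm : ∀ X Y : Word, Δ (word X * word Y) = Δ (word X) * Δ (word Y))
    (m : Word) :
    TensorProduct.map EE LinearMap.id (Δ (word m)) = word 0 ⊗ₜ[ℚ] word m := by
  induction m using Multiset.induction_on with
  | empty =>
    rw [hΔe, TensorProduct.map_tmul, EE_word_zero, LinearMap.id_coe, id_eq]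
  | cons t s ih =>
    obtain ⟨i, l⟩ := t
    have h1 : word (PTree.node i l ::ₘ s) = word {PTree.node i l} * word s := by
      rw [word_mul, Multiset.singleton_add]
    have hsing : ({PTree.node i l} : Word) ≠ 0 := by
      simp
    rw [h1, hmul Δ hΔm, map_mul_tensor EE LinearMap.id EE_mul (fun _ _ => rfl), ih, hΔB i l,
      map_add, map_add, map_EE_B_P1, TensorProduct.map_tmul, TensorProduct.map_tmul,
      EE_word_ne hsing, EE_word_zero, TensorProduct.zero_tmul, LinearMap.id_coe, id_eq,
      zero_add, add_zero, Algebra.TensorProduct.tmul_mul_tmul, word_mul, word_mul,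
      Multiset.singleton_add, add_zero]

lemma mapP1_word (hΔe : Δ (word 0) = word 0 ⊗ₜ[ℚ] word 0)
    (hΔB : ∀ (i : ℕ) (l : List PTree),
      Δ (word {PTree.node i l}) =
        word {PTree.node i l} ⊗ₜ[ℚ] word 0 + word 0 ⊗ₜ[ℚ] word {PTree.node i l} +
          TensorProduct.map LinearMap.id (B i)
            (TensorProduct.map P1 LinearMap.id (Δ (word (l : Multiset PTree)))))
    (hΔm : ∀ X Y : Word, Δ (word X * word Y) = Δ (word X) * Δ (word Y))
    (m : Word) :
    TensorProduct.map P1 LinearMap.id (Δ (word m)) = Δ (word m) - word 0 ⊗ₜ[ℚ] word m := by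
  rw [map_P1_eq, lcounit Δ hΔe hΔB hΔm]

lemma cocycle_word (hΔe : Δ (word 0) = word 0 ⊗ₜ[ℚ] word 0)
    (hΔB : ∀ (i : ℕ) (l : List PTree),
      Δ (word {PTree.node i l}) =
        word {PTree.node i l} ⊗ₜ[ℚ] word 0 + word 0 ⊗ₜ[ℚ] word {PTree.node i l} +
          TensorProduct.map LinearMap.id (B i)
            (TensorProduct.map P1 LinearMap.id (Δ (word (l : Multiset PTree)))))
    (hΔm : ∀ X Y : Word, Δ (word X * word Y) = Δ (word X) * Δ (word Y))
    (i : ℕ) (m : Word) :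
    Δ (B i (word m)) = (B i (word m)) ⊗ₜ[ℚ] word 0
      + TensorProduct.map LinearMap.id (B i) (Δ (word m)) := by
  rw [B_word, hΔB i m.toList]
  rw [show ((m.toList : List PTree) : Multiset PTree) = m from Multiset.coe_toList m]
  rw [mapP1_word Δ hΔe hΔB hΔm, map_sub, TensorProduct.map_tmul, LinearMap.id_coe, id_eq,
    B_word]
  abel

lemma cocycle (hΔe : Δ (word 0) = word 0 ⊗ₜ[ℚ] word 0)
    (hΔB : ∀ (i : ℕ) (l : List PTree),
      Δ (word {PTree.node i l}) =
        word {PTree.node i l} ⊗ₜ[ℚ] word 0 + word 0 ⊗ₜ[ℚ] word {PTree.node i l} +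
          TensorProduct.map LinearMap.id (B i)
            (TensorProduct.map P1 LinearMap.id (Δ (word (l : Multiset PTree)))))
    (hΔm : ∀ X Y : Word, Δ (word X * word Y) = Δ (word X) * Δ (word Y))
    (i : ℕ) (a : A) :
    Δ (B i a) = (B i a) ⊗ₜ[ℚ] word 0
      + TensorProduct.map LinearMap.id (B i) (Δ a) := by
  induction a using AddMonoidAlgebra.induction_linear with
  | zero => rw [map_zero, map_zero, map_zero, TensorProduct.zero_tmul, add_zero]
  | add f g hf hg =>
    rw [map_add, map_add, hf, hg, map_add, map_add, TensorProduct.add_tmul]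
    abel
  | single X c =>
    rw [single_eq_smul_word, map_smul, map_smul, map_smul, map_smul,
      cocycle_word Δ hΔe hΔB hΔm i X, smul_add, TensorProduct.smul_tmul']

end Delta

lemma wsize_singleton (t : PTree) : wsize {t} = treesize t := by
  rw [← Multiset.cons_zero t, wsize_cons, wsize_zero, add_zero]

section Main
variable (Δ : A →ₗ[ℚ] A ⊗[ℚ] A)

lemma base_case (hΔe : Δ (word 0) = word 0 ⊗ₜ[ℚ] word 0) :
    TensorProduct.assoc ℚ A A A (TensorProduct.map Δ LinearMap.id (Δ (word 0))) =
      TensorProduct.map LinearMap.id Δ (Δ (word 0)) := by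
  simp only [hΔe, TensorProduct.map_tmul, LinearMap.id_coe, id_eq, TensorProduct.assoc_tmul]

lemma key (hΔe : Δ (word 0) = word 0 ⊗ₜ[ℚ] word 0)
    (hΔB : ∀ (i : ℕ) (l : List PTree),
      Δ (word {PTree.node i l}) =
        word {PTree.node i l} ⊗ₜ[ℚ] word 0 + word 0 ⊗ₜ[ℚ] word {PTree.node i l} +
          TensorProduct.map LinearMap.id (B i)
            (TensorProduct.map P1 LinearMap.id (Δ (word (l : Multiset PTree)))))
    (hΔm : ∀ X Y : Word, Δ (word X * word Y) = Δ (word X) * Δ (word Y)) :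
    ∀ (n : ℕ) (m : Word), wsize m ≤ n →
      TensorProduct.assoc ℚ A A A (TensorProduct.map Δ LinearMap.id (Δ (word m))) =
        TensorProduct.map LinearMap.id Δ (Δ (word m)) := by
  intro n
  induction n with
  | zero =>
    intro m hm
    have hm0 : m = 0 := wsize_eq_zero (Nat.le_zero.mp hm)
    subst hm0
    exact base_case Δ hΔe
  | succ n ih =>
    intro m hm
    rcases eq_or_ne m 0 with rfl | hne
    · exact base_case Δ hΔe
    · obtain ⟨t, ht⟩ := Multiset.exists_mem_of_ne_zero hne
      obtain ⟨s, rfl⟩ := Multiset.exists_cons_of_mem ht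
      rcases eq_or_ne s 0 with rfl | hs
      · -- singleton tree case
        obtain ⟨i, l⟩ := t
        rw [Multiset.cons_zero]
        have hsz : wsize ((l : List PTree) : Multiset PTree) ≤ n := by
          rw [wsize_cons, wsize_zero, add_zero, treesize_node] at hm
          rw [wsize_coe]
          omega
        have IH := ih _ hsz
        set a : A := word ((l : List PTree) : Multiset PTree) with ha
        set T : A := word {PTree.node i l} with hTdef
        have hT : Δ T = T ⊗ₜ[ℚ] word 0 + word 0 ⊗ₜ[ℚ] T +
            (TensorProduct.map LinearMap.id (B i) (Δ a) - word 0 ⊗ₜ[ℚ] (B i a)) := by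
          rw [hTdef, hΔB i l, ha, mapP1_word Δ hΔe hΔB hΔm, map_sub, TensorProduct.map_tmul,
            LinearMap.id_coe, id_eq]
        have hb : Δ (B i a) = (B i a) ⊗ₜ[ℚ] word 0
            + TensorProduct.map LinearMap.id (B i) (Δ a) :=
          cocycle Δ hΔe hΔB hΔm i _
        have hW : TensorProduct.assoc ℚ A A A
              (TensorProduct.map Δ LinearMap.id (TensorProduct.map LinearMap.id (B i) (Δ a)))
            = TensorProduct.map LinearMap.id
                ((TensorProduct.map LinearMap.id (B i)) ∘ₗ Δ) (Δ a) := by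
          rw [← LinearMap.comp_apply, ← TensorProduct.map_comp, LinearMap.comp_id,
            LinearMap.id_comp]
          rw [show (TensorProduct.map Δ (B i) : A ⊗[ℚ] A →ₗ[ℚ] (A ⊗[ℚ] A) ⊗[ℚ] A)
              = (TensorProduct.map (TensorProduct.map LinearMap.id LinearMap.id) (B i)) ∘ₗ
                (TensorProduct.map Δ LinearMap.id) from by
            rw [← TensorProduct.map_comp, TensorProduct.map_id, LinearMap.id_comp,
              LinearMap.comp_id]]
          rw [LinearMap.comp_apply, ← TensorProduct.map_map_assoc, IH, map_id_map_id]
        have hWr : TensorProduct.map LinearMap.id Δ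
              (TensorProduct.map LinearMap.id (B i) (Δ a))
            = TensorProduct.map LinearMap.id (rW ∘ₗ B i) (Δ a)
              + TensorProduct.map LinearMap.id
                  ((TensorProduct.map LinearMap.id (B i)) ∘ₗ Δ) (Δ a) := by
          rw [map_id_map_id]
          have hc : Δ ∘ₗ B i = rW ∘ₗ B i + (TensorProduct.map LinearMap.id (B i)) ∘ₗ Δ :=
            LinearMap.ext fun x => by
              rw [LinearMap.comp_apply, cocycle Δ hΔe hΔB hΔm i x, LinearMap.add_apply,
                LinearMap.comp_apply, LinearMap.comp_apply, rW_apply]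
          rw [hc, TensorProduct.map_add_right, LinearMap.add_apply]
        rw [hT]
        simp only [map_add, map_sub]
        rw [hW, hWr]
        simp only [TensorProduct.map_tmul, LinearMap.id_coe, id_eq, hT, hb, hΔe,
          TensorProduct.add_tmul, TensorProduct.sub_tmul, TensorProduct.tmul_add,
          TensorProduct.tmul_sub, TensorProduct.assoc_tmul, assoc_tmul_word0, rW_apply,
          map_id_map_id, map_add, map_sub]
        abel
      · -- product case
        have h2 : 1 ≤ wsize s := wsize_pos_of_ne_zero hs
        have h1 : 0 < treesize t := treesize_pos t
        rw [wsize_cons] at hm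
        have IH1 := ih {t} (by rw [wsize_singleton]; omega)
        have IH2 := ih s (by omega)
        rw [show word (t ::ₘ s) = word {t} * word s from by
          rw [word_mul, Multiset.singleton_add]]
        rw [hmul Δ hΔm, map_mul_tensor Δ LinearMap.id (hmul Δ hΔm) (fun _ _ => rfl),
          assoc_mul, IH1, IH2,
          map_mul_tensor LinearMap.id Δ (fun _ _ => rfl) (hmul Δ hΔm)]

end Main

theorem coproduct_coassociative
    (Δ : A →ₗ[ℚ] A ⊗[ℚ] A)
    (hΔe : Δ (word 0) = word 0 ⊗ₜ[ℚ] word 0)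
    (hΔB : ∀ (i : ℕ) (l : List PTree),
      Δ (word {PTree.node i l}) =
        word {PTree.node i l} ⊗ₜ[ℚ] word 0 + word 0 ⊗ₜ[ℚ] word {PTree.node i l} +
          TensorProduct.map LinearMap.id (B i)
            (TensorProduct.map P1 LinearMap.id (Δ (word (l : Multiset PTree)))))
    (hΔm : ∀ X Y : Word, Δ (word X * word Y) = Δ (word X) * Δ (word Y)) :
    ∀ a : A,
      TensorProduct.assoc ℚ A A A (TensorProduct.map Δ LinearMap.id (Δ a)) =
        TensorProduct.map LinearMap.id Δ (Δ a) := by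
  intro a
  induction a using AddMonoidAlgebra.induction_linear with
  | zero => simp only [map_zero]
  | add f g hf hg => simp only [map_add, hf, hg]
  | single m c =>
    rw [single_eq_smul_word]
    simp only [map_smul]
    rw [key Δ hΔe hΔB hΔm (wsize m) m le_rfl]
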